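/- Let G be a Polish group and let X denote the completion of G with respect to the Roelcke uniformity. Then G is locally Roelcke precompact if and only if X is locally compact. -/

import Mathlib

open scoped Pointwise

/-- A subset `A` of a topological group `G` is *Roelcke precompact* if for every
neighborhood `V` of the identity there is a finite set `F ⊆ G` with `A ⊆ V * F * V`,
where `V * F * V = {v * f * w : v, w ∈ V, f ∈ F}`. -/
def RoelckePrecompact {G : Type*} [Group G] [TopologicalSpace G] (A : Set G) : Prop :=
  ∀ V ∈ nhds (1 : G), ∃ F : Finset G, A ⊆ V * (F : Set G) * V

/-- A topological group is *locally Roelcke precompact* if some open neighborhood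
of the identity is Roelcke precompact. -/
def LocallyRoelckePrecompact (G : Type*) [Group G] [TopologicalSpace G] : Prop :=
  ∃ U : Set G, IsOpen U ∧ (1 : G) ∈ U ∧ RoelckePrecompact U

/-- The left uniformity of a topological group: the pullback under inversion of the
right uniformity `TopologicalGroup.toUniformSpace G`; its basic entourages are the sets
`{(f,g) | f⁻¹ * g ∈ V}` for `V` a neighborhood of the identity. -/
noncomputable def leftUniformity (G : Type*) [Group G] [TopologicalSpace G]
    [IsTopologicalGroup G] : UniformSpace G :=
  UniformSpace.comap (fun g : G => g⁻¹) (IsTopologicalGroup.rightUniformSpace G)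

/-- The Roelcke uniformity: the meet of the left and right group uniformities, i.e. the
finest uniformity coarser than both.  (In Mathlib's order on `UniformSpace`, where finer
uniformities are smaller, this meet is the lattice join `⊔`.) -/
noncomputable def roelckeUniformity (G : Type*) [Group G] [TopologicalSpace G]
    [IsTopologicalGroup G] : UniformSpace G :=
  leftUniformity G ⊔ IsTopologicalGroup.rightUniformSpace G

/-- The Roelcke completion of a topological group: the completion of `G` with respect to
the Roelcke uniformity. -/
def RoelckeCompletion (G : Type*) [Group G] [TopologicalSpace G] [IsTopologicalGroup G] :
    Type _ :=
  @UniformSpace.Completion G (roelckeUniformity G)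

noncomputable instance RoelckeCompletion.instUniformSpace (G : Type*) [Group G]
    [TopologicalSpace G] [IsTopologicalGroup G] : UniformSpace (RoelckeCompletion G) :=
  @UniformSpace.Completion.uniformSpace G (roelckeUniformity G)

/-- The canonical map from `G` to its Roelcke completion. -/
noncomputable def toRoelckeCompletion (G : Type*) [Group G] [TopologicalSpace G]
    [IsTopologicalGroup G] : G → RoelckeCompletion G :=
  @UniformSpace.Completion.coe' G (roelckeUniformity G)

open Filter Set Topology Uniformity
open scoped SetRel

/-!
The sets `{(x, y) | x ∈ V * {y} * V}`, `V` a neighbourhood of `1`, form a basis of the Roelcke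
uniformity: they generate a uniformity coarser than the left and the right one, and inside the
composition of any left and right entourages lies one of them. Hence Roelcke precompact sets are
exactly the sets that are totally bounded for the Roelcke uniformity.

If `U` is a Roelcke precompact neighbourhood of `1`, then products of Roelcke precompact sets are
Roelcke precompact: with `A ⊆ W F W` and `B ⊆ W F' W` for `W * W ⊆ U`, we get
`A * B ⊆ W (F U F') W`, and each of the finitely many translates `f U f'` is Roelcke precompact.
So all the balls `U * {g} * U` of one Roelcke entourage are totally bounded. In the completion,
a small ball around any point lies in the closure of the image of one such ball, which is compact
by completeness. Conversely, a compact neighbourhood of the image of `1` in the completion pulls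
back to a totally bounded neighbourhood of `1`.
-/

theorem Set.mem_mul_singleton_mul {G : Type*} [Mul G] {s t : Set G} {x y : G} :
    y ∈ s * {x} * t ↔ ∃ v ∈ s, ∃ w ∈ t, v * x * w = y := by
  simp only [mem_mul, mem_singleton_iff]
  aesop

namespace IsUniformInducing

variable {α β : Type*} [UniformSpace α] [UniformSpace β] {f : α → β}

theorem exists_totallyBounded_mem_nhds [WeaklyLocallyCompactSpace β]
    (hf : IsUniformInducing f) (a : α) : ∃ s ∈ 𝓝 a, TotallyBounded s := by
  obtain ⟨K, hK, hKa⟩ := exists_compact_mem_nhds (f a)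
  exact ⟨f ⁻¹' K, hf.uniformContinuous.continuous.continuousAt hKa,
    totallyBounded_preimage hf hK.totallyBounded⟩

theorem locallyCompactSpace_of_denseRange [CompleteSpace β] (hf : IsUniformInducing f)
    (hd : DenseRange f) {E : SetRel α α} (hE : E ∈ 𝓤 α)
    (hball : ∀ a, TotallyBounded {b | (b, a) ∈ E}) : LocallyCompactSpace β := by
  suffices WeaklyLocallyCompactSpace β from inferInstance
  refine ⟨fun x => ?_⟩
  rw [← hf.comap_uniformity] at hE
  obtain ⟨D, hD, hDE⟩ := mem_comap.1 hE
  obtain ⟨D', hD', hD'open, hD'symm, hD'D⟩ := comp_open_symm_mem_uniformity_sets hD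
  obtain ⟨a, hax⟩ : ∃ a, f a ∈ UniformSpace.ball x D' :=
    hd.exists_mem_open (UniformSpace.isOpen_ball x hD'open) ⟨x, UniformSpace.mem_ball_self x hD'⟩
  have hsub : UniformSpace.ball x D' ∩ range f ⊆ f '' {b | (b, a) ∈ E} := by
    rintro _ ⟨hbx, b, rfl⟩
    exact ⟨b, hDE (hD'D ⟨x, SetRel.symm D' hbx, hax⟩), rfl⟩
  refine ⟨closure (f '' {b | (b, a) ∈ E}), ?_, ?_⟩
  · exact ((hball a).image hf.uniformContinuous).closure.isCompact_of_isClosed isClosed_closure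
  · exact mem_of_superset (UniformSpace.ball_mem_nhds x hD')
      ((hd.open_subset_closure_inter (UniformSpace.isOpen_ball x hD'open)).trans
        (closure_mono hsub))

end IsUniformInducing

section Entourage

variable {G : Type*} [Group G]

-- Oriented so that `{x | (x, y) ∈ roelckeEntourage V}`, the set used by `TotallyBounded`,
-- is `V * {y} * V`.
def roelckeEntourage (V : Set G) : SetRel G G := {p | p.1 ∈ V * {p.2} * V}

theorem mem_roelckeEntourage {V : Set G} {x y : G} :
    (x, y) ∈ roelckeEntourage V ↔ ∃ v ∈ V, ∃ w ∈ V, v * y * w = x :=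
  mem_mul_singleton_mul

theorem roelckeEntourage_mono : Monotone (roelckeEntourage (G := G)) :=
  fun _ _ h _ hp => mul_subset_mul (mul_subset_mul_right h) h hp

theorem biUnion_roelckeEntourage (V t : Set G) :
    ⋃ y ∈ t, {x | (x, y) ∈ roelckeEntourage V} = V * t * V := by
  simp only [roelckeEntourage, mem_ofPred_eq, ofPred_mem_eq, ← iUnion₂_mul, ← mul_iUnion₂,
    biUnion_of_singleton]

theorem self_mem_roelckeEntourage {V : Set G} (hV : (1 : G) ∈ V) (x : G) :
    (x, x) ∈ roelckeEntourage V :=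
  mem_mul_singleton_mul.2 ⟨1, hV, 1, hV, by simp⟩

theorem roelckeEntourage_inv_subset (V : Set G) :
    roelckeEntourage V⁻¹ ⊆ Prod.swap ⁻¹' roelckeEntourage V := by
  rintro ⟨x, y⟩ h
  obtain ⟨v, hv, w, hw, rfl⟩ := mem_roelckeEntourage.1 h
  exact mem_roelckeEntourage.2 ⟨v⁻¹, hv, w⁻¹, hw, by dsimp; group⟩

theorem roelckeEntourage_comp_subset (V : Set G) :
    roelckeEntourage V ○ roelckeEntourage V ⊆ roelckeEntourage (V * V) := by
  rintro ⟨x, z⟩ ⟨y, hxy, hyz⟩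
  obtain ⟨v, hv, w, hw, rfl⟩ := mem_roelckeEntourage.1 hxy
  obtain ⟨v', hv', w', hw', rfl⟩ := mem_roelckeEntourage.1 hyz
  exact mem_mul_singleton_mul.2 ⟨v * v', mul_mem_mul hv hv', w' * w, mul_mem_mul hw' hw, by group⟩

theorem roelckeEntourage_subset_comp (V₁ V₂ : Set G) :
    roelckeEntourage (V₁ ∩ V₂⁻¹) ⊆
      {p : G × G | p.2⁻¹ * p.1 ∈ V₁} ○ {p : G × G | p.2 * p.1⁻¹ ∈ V₂} := by
  rintro ⟨x, z⟩ h
  obtain ⟨v, hv, w, hw, rfl⟩ := mem_roelckeEntourage.1 h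
  exact ⟨v * z, by simpa [mul_assoc] using hw.1, by simpa using hv.2⟩

end Entourage

section RoelckeUniformity

variable (G : Type*) [Group G] [TopologicalSpace G]

theorem hasBasis_lift'_roelckeEntourage :
    ((𝓝 (1 : G)).lift' roelckeEntourage).HasBasis (· ∈ 𝓝 (1 : G)) roelckeEntourage :=
  (𝓝 (1 : G)).basis_sets.lift' roelckeEntourage_mono

variable [IsTopologicalGroup G]

@[reducible]
noncomputable def roelckeEntourageUniformSpace : UniformSpace G :=
  .ofCore <| .mk' ((𝓝 (1 : G)).lift' roelckeEntourage)
    (fun _ hr x => by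
      obtain ⟨V, hV, hVr⟩ := (hasBasis_lift'_roelckeEntourage G).mem_iff.1 hr
      exact hVr (self_mem_roelckeEntourage (mem_of_mem_nhds hV) x))
    (fun _ hr => by
      obtain ⟨V, hV, hVr⟩ := (hasBasis_lift'_roelckeEntourage G).mem_iff.1 hr
      exact mem_of_superset ((hasBasis_lift'_roelckeEntourage G).mem_of_mem (inv_mem_nhds_one G hV))
        ((roelckeEntourage_inv_subset V).trans (preimage_mono hVr)))
    (fun _ hr => by
      obtain ⟨V, hV, hVr⟩ := (hasBasis_lift'_roelckeEntourage G).mem_iff.1 hr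
      obtain ⟨W, hWo, hW1, hWV⟩ := exists_open_nhds_one_mul_subset hV
      exact ⟨_, (hasBasis_lift'_roelckeEntourage G).mem_of_mem (hWo.mem_nhds hW1),
        (roelckeEntourage_comp_subset W).trans ((roelckeEntourage_mono hWV).trans hVr)⟩)

theorem uniformity_leftUniformity :
    𝓤[leftUniformity G] = comap (fun p : G × G => p.2⁻¹ * p.1) (𝓝 1) := by
  rw [leftUniformity, uniformity_comap, uniformity_eq_comap_nhds_one', comap_comap]
  simp only [Function.comp_def, Prod.map, inv_inv]

theorem roelckeUniformity_eq : roelckeUniformity G = roelckeEntourageUniformSpace G := by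
  refine le_antisymm (sup_le ?_ ?_) fun s hs => ?_
  · refine (hasBasis_lift'_roelckeEntourage G).ge_iff.2 fun V hV => ?_
    show _ ∈ 𝓤[leftUniformity G]
    rw [uniformity_leftUniformity]
    refine mem_comap.2 ⟨V, hV, ?_⟩
    rintro ⟨x, y⟩ h
    exact mem_roelckeEntourage.2 ⟨1, mem_of_mem_nhds hV, y⁻¹ * x, h, by group⟩
  · refine (hasBasis_lift'_roelckeEntourage G).ge_iff.2 fun V hV => ?_
    show _ ∈ 𝓤[IsTopologicalGroup.rightUniformSpace G]
    rw [uniformity_eq_comap_nhds_one']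
    refine mem_comap.2 ⟨V⁻¹, inv_mem_nhds_one G hV, ?_⟩
    rintro ⟨x, y⟩ h
    exact mem_roelckeEntourage.2 ⟨x * y⁻¹, by simpa using h, 1, mem_of_mem_nhds hV, by group⟩
  · obtain ⟨t, ht, hts⟩ := @comp_mem_uniformity_sets G (roelckeUniformity G) s hs
    have htl : t ∈ 𝓤[leftUniformity G] := (le_sup_left : _ ≤ roelckeUniformity G) ht
    have htr : t ∈ 𝓤[IsTopologicalGroup.rightUniformSpace G] :=
      (le_sup_right : _ ≤ roelckeUniformity G) ht
    rw [uniformity_leftUniformity] at htl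
    rw [uniformity_eq_comap_nhds_one'] at htr
    obtain ⟨V₁, hV₁, hV₁t⟩ := mem_comap.1 htl
    obtain ⟨V₂, hV₂, hV₂t⟩ := mem_comap.1 htr
    exact (hasBasis_lift'_roelckeEntourage G).mem_iff.2 ⟨V₁ ∩ V₂⁻¹,
      inter_mem hV₁ (inv_mem_nhds_one G hV₂),
      (roelckeEntourage_subset_comp V₁ V₂).trans ((SetRel.comp_subset_comp hV₁t hV₂t).trans hts)⟩

theorem roelckeUniformity_hasBasis :
    𝓤[roelckeUniformity G].HasBasis (· ∈ 𝓝 (1 : G)) roelckeEntourage :=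
  roelckeUniformity_eq G ▸ hasBasis_lift'_roelckeEntourage G

end RoelckeUniformity

section RoelckePrecompact

variable {G : Type*} [Group G] [TopologicalSpace G]

theorem RoelckePrecompact.mono {A B : Set G} (hB : RoelckePrecompact B) (h : A ⊆ B) :
    RoelckePrecompact A :=
  fun V hV => (hB V hV).imp fun _ hF => h.trans hF

theorem roelckePrecompact_singleton (g : G) : RoelckePrecompact ({g} : Set G) :=
  fun V hV => ⟨{g}, by
    simpa using mem_mul_singleton_mul.2 ⟨1, mem_of_mem_nhds hV, 1, mem_of_mem_nhds hV, by simp⟩⟩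

theorem locallyRoelckePrecompact_iff_exists_mem_nhds :
    LocallyRoelckePrecompact G ↔ ∃ U ∈ 𝓝 (1 : G), RoelckePrecompact U :=
  ⟨fun ⟨U, hUo, hU1, hU⟩ => ⟨U, hUo.mem_nhds hU1, hU⟩,
    fun ⟨U, hU, hUrp⟩ => ⟨interior U, isOpen_interior, mem_interior_iff_mem_nhds.2 hU,
      hUrp.mono interior_subset⟩⟩

variable [IsTopologicalGroup G]

theorem RoelckePrecompact.singleton_mul_mul_singleton {A : Set G} (hA : RoelckePrecompact A)
    (g h : G) : RoelckePrecompact ({g} * A * {h}) := by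
  classical
  intro V hV
  have hg : (fun x => g * x * g⁻¹) ⁻¹' V ∈ 𝓝 (1 : G) :=
    (continuous_const.mul continuous_id |>.mul continuous_const).tendsto' 1 1 (by simp) hV
  have hh : (fun x => h⁻¹ * x * h) ⁻¹' V ∈ 𝓝 (1 : G) :=
    (continuous_const.mul continuous_id |>.mul continuous_const).tendsto' 1 1 (by simp) hV
  obtain ⟨F, hF⟩ := hA _ (inter_mem hg hh)
  refine ⟨F.image (fun f => g * f * h), ?_⟩
  rw [singleton_mul, mul_singleton, image_image]
  rintro _ ⟨a, ha, rfl⟩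
  obtain ⟨_, ⟨v, hv, f, hf, rfl⟩, w, hw, rfl⟩ := hF ha
  refine ⟨_, ⟨g * v * g⁻¹, hv.1, g * f * h, Finset.mem_image_of_mem _ hf, rfl⟩,
    h⁻¹ * w * h, hw.2, by group⟩

theorem RoelckePrecompact.mul {U A B : Set G} (hA : RoelckePrecompact A)
    (hB : RoelckePrecompact B) (hU : U ∈ 𝓝 (1 : G)) (hUrp : RoelckePrecompact U) :
    RoelckePrecompact (A * B) := by
  classical
  intro V hV
  obtain ⟨V₀, hV₀, hV₀V⟩ := exists_nhds_one_split hV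
  obtain ⟨U₀, hU₀, hU₀U⟩ := exists_nhds_one_split hU
  obtain ⟨FA, hFA⟩ := hA _ (inter_mem hU₀ hV₀)
  obtain ⟨FB, hFB⟩ := hB _ (inter_mem hU₀ hV₀)
  choose E hE using fun p : G × G => hUrp.singleton_mul_mul_singleton p.1 p.2 V₀ hV₀
  refine ⟨(FA ×ˢ FB).biUnion E, ?_⟩
  rintro _ ⟨a, ha, b, hb, rfl⟩
  obtain ⟨_, ⟨w₁, hw₁, f, hf, rfl⟩, w₂, hw₂, rfl⟩ := hFA ha
  obtain ⟨_, ⟨w₃, hw₃, g, hg, rfl⟩, w₄, hw₄, rfl⟩ := hFB hb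
  obtain ⟨_, ⟨v₁, hv₁, e, he, rfl⟩, v₂, hv₂, hmid⟩ :=
    hE (f, g) ⟨_, ⟨f, rfl, _, hU₀U _ hw₂.1 _ hw₃.1, rfl⟩, g, rfl, rfl⟩
  have heE : e ∈ (FA ×ˢ FB).biUnion E :=
    Finset.mem_biUnion.2 ⟨(f, g), Finset.mem_product.2 ⟨hf, hg⟩, he⟩
  refine ⟨_, ⟨w₁ * v₁, hV₀V _ hw₁.2 _ hv₁, e, heE, rfl⟩, v₂ * w₄, hV₀V _ hv₂ _ hw₄.2, ?_⟩
  calc w₁ * v₁ * e * (v₂ * w₄) = w₁ * (v₁ * e * v₂) * w₄ := by group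
    _ = w₁ * (f * (w₂ * w₃) * g) * w₄ := congrArg (w₁ * · * w₄) hmid
    _ = w₁ * f * w₂ * (w₃ * g * w₄) := by group

theorem RoelckePrecompact.mul_singleton_mul {U : Set G} (hU : U ∈ 𝓝 (1 : G))
    (hUrp : RoelckePrecompact U) (g : G) : RoelckePrecompact (U * {g} * U) :=
  (hUrp.mul (roelckePrecompact_singleton g) hU hUrp).mul hUrp hU hUrp

theorem roelckePrecompact_iff_totallyBounded {A : Set G} :
    RoelckePrecompact A ↔ @TotallyBounded G (roelckeUniformity G) A := by
  rw [@HasBasis.totallyBounded_iff G (roelckeUniformity G) _ _ _ (roelckeUniformity_hasBasis G)]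
  simp only [biUnion_roelckeEntourage]
  refine forall₂_congr fun V _ => ⟨fun ⟨F, hF⟩ => ⟨F, F.finite_toSet, hF⟩, fun ⟨t, ht, hA⟩ => ?_⟩
  exact ⟨ht.toFinset, by simpa using hA⟩

end RoelckePrecompact

theorem locallyRoelckePrecompact_iff_roelckeCompletion_locallyCompact_general
    (G : Type*) [Group G] [TopologicalSpace G] [IsTopologicalGroup G] :
    LocallyRoelckePrecompact G ↔ LocallyCompactSpace (RoelckeCompletion G) := by
  let := roelckeUniformity G
  rw [locallyRoelckePrecompact_iff_exists_mem_nhds]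
  constructor
  · rintro ⟨U, hU, hUrp⟩
    exact (UniformSpace.Completion.isUniformInducing_coe G).locallyCompactSpace_of_denseRange
      UniformSpace.Completion.denseRange_coe ((roelckeUniformity_hasBasis G).mem_of_mem hU)
      fun g => roelckePrecompact_iff_totallyBounded.1 (hUrp.mul_singleton_mul hU g)
  · intro h
    have : LocallyCompactSpace (UniformSpace.Completion G) := h
    obtain ⟨s, hs, hs_tb⟩ :=
      (UniformSpace.Completion.isUniformInducing_coe G).exists_totallyBounded_mem_nhds 1
    exact ⟨s, nhds_mono (UniformSpace.toTopologicalSpace_mono le_sup_right) hs,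
      roelckePrecompact_iff_totallyBounded.2 hs_tb⟩

/-- A Polish group is locally Roelcke precompact if and only if its completion in the
Roelcke uniformity is locally compact. -/
theorem locallyRoelckePrecompact_iff_roelckeCompletion_locallyCompact
    (G : Type*) [Group G] [TopologicalSpace G] [IsTopologicalGroup G] [PolishSpace G] :
    LocallyRoelckePrecompact G ↔ LocallyCompactSpace (RoelckeCompletion G) :=
  locallyRoelckePrecompact_iff_roelckeCompletion_locallyCompact_general G
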